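/- Let t < t₀ and suppose f : [t, t₀) → ℝ is differentiable and satisfies −f'(s) ≤ (1/2) R(s) − f(s)/(2(t₀ − s)) for all s ∈ [t, t₀), where R : [t, t₀) → ℝ is continuous and integrable against √(t₀−s). If √(t₀ − t₁) · f(t₁) → 0 as t₁ → t₀⁻ (e.g. f is bounded near t₀), then f(t) ≤ (1/(2√(t₀ − t))) ∫_t^{t₀} √(t₀ − s) R(s) ds. -/

import Mathlib

/-!
Multiplying the differential inequality by `√(t₀ - s)` turns it into
`d/ds (√(t₀ - s) f s) ≥ -(1/2) √(t₀ - s) R s`. Integrating from `t` to `t₁ < t₀` gives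
`√(t₀ - t) f t ≤ √(t₀ - t₁) f t₁ + (1/2) ∫_t^{t₁} √(t₀ - s) R s ds`, and letting `t₁ → t₀⁻`
the first term on the right vanishes.
-/

open Set Filter MeasureTheory Topology

theorem le_add_integral_of_neg_le_deriv_of_tendsto {g g' w : ℝ → ℝ} {a b L : ℝ} (hab : a < b)
    (hg : ContinuousOn g (Ico a b)) (hderiv : ∀ x ∈ Ioo a b, HasDerivAt g (g' x) x)
    (hw : IntervalIntegrable w volume a b) (hle : ∀ x ∈ Ioo a b, -w x ≤ g' x)
    (hlim : Tendsto g (𝓝[<] b) (𝓝 L)) :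
    g a ≤ L + ∫ x in a..b, w x := by
  have hIcc : IntegrableOn w (Icc a b) := (intervalIntegrable_iff_integrableOn_Icc_of_le hab.le).1 hw
  have hbound : ∀ x ∈ Ioo a b, g a ≤ g x + ∫ y in a..x, w y := by
    intro x hx
    have := intervalIntegral.sub_le_integral_of_hasDeriv_right_of_le (g := fun y => -g y)
      (g' := fun y => -g' y) hx.1.le (hg.mono (Icc_subset_Ico_right hx.2)).neg
      (fun y hy => ((hderiv y ⟨hy.1, hy.2.trans hx.2⟩).neg).hasDerivWithinAt)
      (hIcc.mono_set (Icc_subset_Icc_right hx.2.le))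
      (fun y hy => neg_le.1 (hle y ⟨hy.1, hy.2.trans hx.2⟩))
    linarith
  have hprim : Tendsto (fun x => ∫ y in a..x, w y) (𝓝[Ioo a b] b) (𝓝 (∫ y in a..b, w y)) := by
    have hcont := intervalIntegral.continuousOn_primitive_interval (uIcc_of_le hab.le ▸ hIcc)
    exact (hcont b right_mem_uIcc).tendsto.mono_left
      (nhdsWithin_mono _ (uIcc_of_le hab.le ▸ Ioo_subset_Icc_self))
  rw [nhdsWithin_Ioo_eq_nhdsLT hab] at hprim
  refine ge_of_tendsto (hlim.add hprim) ?_
  rw [← nhdsWithin_Ioo_eq_nhdsLT hab]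
  exact eventually_nhdsWithin_of_forall hbound

theorem hasDerivAt_sqrt_sub_mul {f : ℝ → ℝ} {f' c s : ℝ} (hs : s < c) (hf : HasDerivAt f f' s) :
    HasDerivAt (fun x => √(c - x) * f x) (√(c - s) * f' - f s / (2 * √(c - s))) s := by
  have hsqrt := ((hasDerivAt_id s).const_sub c).sqrt (sub_pos.2 hs).ne'
  exact (hsqrt.mul hf).congr_deriv (by simp only [id]; ring)

theorem neg_half_sqrt_mul_le_of_neg_le {c s f₀ f₁ r : ℝ} (hs : s < c)
    (h : -f₁ ≤ 1 / 2 * r - f₀ / (2 * (c - s))) :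
    -(1 / 2 * (√(c - s) * r)) ≤ √(c - s) * f₁ - f₀ / (2 * √(c - s)) := by
  have hq : 0 < √(c - s) := Real.sqrt_pos.2 (sub_pos.2 hs)
  rw [← Real.sq_sqrt (sub_pos.2 hs).le] at h
  have hfactor : √(c - s) * f₁ - f₀ / (2 * √(c - s)) + 1 / 2 * (√(c - s) * r)
      = √(c - s) * (f₁ + 1 / 2 * r - f₀ / (2 * √(c - s) ^ 2)) := by
    field_simp
    ring
  nlinarith [mul_nonneg hq.le (show 0 ≤ f₁ + 1 / 2 * r - f₀ / (2 * √(c - s) ^ 2) by linarith)]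

theorem stmt_5_general (t t₀ : ℝ) (h : t < t₀) (f f' R : ℝ → ℝ)
    (hint : IntervalIntegrable (fun s => Real.sqrt (t₀ - s) * R s)
      MeasureTheory.volume t t₀)
    (hf : ∀ s ∈ Set.Ico t t₀, HasDerivAt f (f' s) s)
    (hode : ∀ s ∈ Set.Ico t t₀, -f' s ≤ (1 / 2) * R s - f s / (2 * (t₀ - s)))
    (hlim : Filter.Tendsto (fun t₁ => Real.sqrt (t₀ - t₁) * f t₁)
      (nhdsWithin t₀ (Set.Iio t₀)) (nhds 0)) :
    f t ≤ (1 / (2 * Real.sqrt (t₀ - t))) * ∫ s in t..t₀, Real.sqrt (t₀ - s) * R s := by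
  have hsqrt_f : √(t₀ - t) * f t ≤ 0 + ∫ s in t..t₀, 1 / 2 * (√(t₀ - s) * R s) :=
    le_add_integral_of_neg_le_deriv_of_tendsto h
      (fun s hs => (hasDerivAt_sqrt_sub_mul hs.2 (hf s hs)).continuousAt.continuousWithinAt)
      (fun s hs => hasDerivAt_sqrt_sub_mul hs.2 (hf s (Ioo_subset_Ico_self hs)))
      (hint.const_mul _)
      (fun s hs => neg_half_sqrt_mul_le_of_neg_le hs.2 (hode s (Ioo_subset_Ico_self hs))) hlim
  rw [intervalIntegral.integral_const_mul, zero_add] at hsqrt_f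
  rw [one_div_mul_eq_div, le_div_iff₀ (by positivity)]
  linarith

/-- Integrating Perelman's Harnack inequality: if `-f'(s) ≤ (1/2) R s - f s /(2(t₀-s))`
on `[t, t₀)` and `√(t₀-t₁) f(t₁) → 0` as `t₁ → t₀⁻`, then
`f t ≤ (1/(2√(t₀-t))) ∫_t^{t₀} √(t₀-s) R(s) ds`. -/
theorem stmt_5 (t t₀ : ℝ) (h : t < t₀) (f f' R : ℝ → ℝ)
    (hR : ContinuousOn R (Set.Ico t t₀))
    (hint : IntervalIntegrable (fun s => Real.sqrt (t₀ - s) * R s)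
      MeasureTheory.volume t t₀)
    (hf : ∀ s ∈ Set.Ico t t₀, HasDerivAt f (f' s) s)
    (hode : ∀ s ∈ Set.Ico t t₀, -f' s ≤ (1 / 2) * R s - f s / (2 * (t₀ - s)))
    (hlim : Filter.Tendsto (fun t₁ => Real.sqrt (t₀ - t₁) * f t₁)
      (nhdsWithin t₀ (Set.Iio t₀)) (nhds 0)) :
    f t ≤ (1 / (2 * Real.sqrt (t₀ - t))) * ∫ s in t..t₀, Real.sqrt (t₀ - s) * R s :=
  stmt_5_general t t₀ h f f' R hint hf hode hlim
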